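/- For each n ≥ 1 and 0 ≤ v ≤ n-1, the number of bilateral Dyck paths of length 2n with exactly v up-steps at even positions equals the number of bilateral Dyck paths of length 2n with exactly v+1 peaks (counting the initial vertex as a peak when the first step is down and the final vertex as a peak when the last step is up). -/

import Mathlib

open Finset
open scoped Classical

/-- Extend a finite step sequence to ℕ (false outside range). -/
def extS {m : ℕ} (s : Fin m → Bool) : ℕ → Bool :=
  fun j => if h : j < m then s ⟨j, h⟩ else false

/-- Number of up-steps (true entries) among the first `k` steps. -/
def upsTo {m : ℕ} (s : Fin m → Bool) (k : ℕ) : ℕ :=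
  ((Finset.range k).filter (fun j => extS s j = true)).card

/-- A bilateral Dyck path of length 2n: a ±1-sequence with sum 0,
encoded as a Bool sequence with exactly n `true`s. -/
def isBilateral (n : ℕ) (s : Fin (2*n) → Bool) : Prop := upsTo s (2*n) = n

/-- A Dyck path of length 2n: sum 0 and all partial sums nonnegative
(`k ≤ 2 * upsTo s k` says #ups ≥ #downs among the first k steps). -/
def isDyck (n : ℕ) (s : Fin (2*n) → Bool) : Prop :=
  upsTo s (2*n) = n ∧ ∀ k ≤ 2*n, k ≤ 2 * upsTo s k

/-- Interior peaks: 1-indexed positions i (1 ≤ i ≤ m-1) with step i up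
and step i+1 down; 0-indexed j = i-1 ranges over `range (m-1)`. -/
def interiorPeaks {m : ℕ} (s : Fin m → Bool) : ℕ :=
  ((Finset.range (m-1)).filter (fun j => extS s j = true ∧ extS s (j+1) = false)).card

/-- Peaks with the boundary convention: the initial vertex is a peak if the
first step is down, the final vertex is a peak if the last step is up. -/
def bPeaks (n : ℕ) (s : Fin (2*n) → Bool) : ℕ :=
  interiorPeaks s + (if extS s 0 = false then 1 else 0)
    + (if extS s (2*n-1) = true then 1 else 0)

/-- Number of up-steps at even 1-indexed positions (odd 0-indexed). -/
def evenUps (n : ℕ) (s : Fin (2*n) → Bool) : ℕ :=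
  ((Finset.range (2*n)).filter (fun j => j % 2 = 1 ∧ extS s j = true)).card

/-- Number of up-steps at odd 1-indexed positions (even 0-indexed). -/
def oddUps (n : ℕ) (s : Fin (2*n) → Bool) : ℕ :=
  ((Finset.range (2*n)).filter (fun j => j % 2 = 0 ∧ extS s j = true)).card

/-- Number of ones (arrows) in a Boolean sequence. -/
def ones {m : ℕ} (f : Fin m → Bool) : ℕ := upsTo f m

/-- 1-indexed position of the h-th one in `f`: the least `k` such that the
first `k` entries contain exactly `h` ones. -/
noncomputable def nthOnePos {m : ℕ} (f : Fin m → Bool) (h : ℕ) : ℕ := sInf {k | upsTo f k = h}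

/-- A checkmark pair of size n. -/
def isCheckPair (n : ℕ) (p : (Fin n → Bool) × (Fin (n-1) → Bool)) : Prop :=
  ones p.1 = ones p.2 ∨ ones p.1 = ones p.2 + 1

/-- A Dyck checkmark pair of size n. -/
def isDyckCheckPair (n : ℕ) (p : (Fin n → Bool) × (Fin (n-1) → Bool)) : Prop :=
  isCheckPair n p ∧ ∀ h, 1 ≤ h → h ≤ ones p.2 → nthOnePos p.2 h < nthOnePos p.1 h

/-- Narayana number N(n,v) = C(n,v)C(n-1,v)/(v+1). -/
def narayana (n v : ℕ) : ℕ := n.choose v * (n-1).choose v / (v + 1)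

/-- The bijection φ: s_NW(i) = 1 iff step 2i-1 (1-indexed) is down;
s_SW(i) = 1 iff step 2i (1-indexed) is up. -/
def phiMap (n : ℕ) (s : Fin (2*n) → Bool) : (Fin n → Bool) × (Fin (n-1) → Bool) :=
  (fun i => ! extS s (2*(i:ℕ)), fun i => extS s (2*(i:ℕ)+1))

/-- Height (#ups − #downs) before step j (0-indexed). -/
def height {m : ℕ} (s : Fin m → Bool) (j : ℕ) : ℤ := 2 * (upsTo s j : ℤ) - j

/-- Step j lies in an odd band: an up-step from even height, or a down-step
from odd height. -/
def inOddBand {m : ℕ} (s : Fin m → Bool) (j : ℕ) : Prop :=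
  (extS s j = true ∧ Even (height s j)) ∨ (extS s j = false ∧ Odd (height s j))

/-!
Both sides equal `C(n, v)²`.

Reading the steps at odd and at even positions separately, a bilateral path with `v` up-steps at
even positions is a pair of subsets of `{0, …, n - 1}` of sizes `v` and `n - v`.

For the peaks, prefix a virtual up-step and append a down-step: the peaks of the path become the
descents `UD` of a word with `n + 1` up- and `n + 1` down-steps that starts with an up-step and ends
with a down-step. Such a word with `v + 1` descents alternates `v + 1` runs of up-steps with `v + 1`
runs of down-steps, and each family of runs is one of the `C(n, v)` compositions of `n + 1` into
`v + 1` parts. The run count is established by a recursion removing the last step.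
-/

lemma extS_of_lt {m : ℕ} (s : Fin m → Bool) {j : ℕ} (h : j < m) : extS s j = s ⟨j, h⟩ :=
  dif_pos h

lemma extS_of_le {m : ℕ} (s : Fin m → Bool) {j : ℕ} (h : m ≤ j) : extS s j = false :=
  dif_neg (by omega)

lemma extS_snoc {m : ℕ} (t : Fin m → Bool) (b : Bool) (j : ℕ) :
    extS (Fin.snoc t b) j = if j = m then b else extS t j := by
  rcases lt_trichotomy j m with h | rfl | h
  · rw [if_neg h.ne, extS_of_lt _ (by omega), extS_of_lt _ h]
    exact Fin.snoc_castSucc (α := fun _ => Bool) (i := ⟨j, h⟩) ..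
  · rw [if_pos rfl, extS_of_lt _ (by omega)]
    exact Fin.snoc_last (α := fun _ => Bool) ..
  · rw [if_neg h.ne', extS_of_le _ (by omega), extS_of_le _ h.le]

lemma extS_snoc_false {m : ℕ} (t : Fin m → Bool) : extS (Fin.snoc t false) = extS t := by
  funext j
  rw [extS_snoc]
  split_ifs with h
  · rw [h, extS_of_le _ le_rfl]
  · rfl

lemma upsTo_succ {m : ℕ} (s : Fin m → Bool) (j : ℕ) :
    upsTo s (j + 1) = upsTo s j + (extS s j).toNat := by
  unfold upsTo
  rw [range_add_one, filter_insert]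
  cases extS s j
  · rfl
  · rw [if_pos rfl, card_insert_of_notMem (by simp)]
    rfl

lemma upsTo_le {m : ℕ} (s : Fin m → Bool) (j : ℕ) : upsTo s j ≤ j :=
  (card_filter_le _ _).trans (card_range j).le

lemma upsTo_congr {m m' : ℕ} {s : Fin m → Bool} {t : Fin m' → Bool} {k : ℕ}
    (h : ∀ j < k, extS s j = extS t j) : upsTo s k = upsTo t k := by
  unfold upsTo
  congr 1
  exact filter_congr fun j hj => by rw [h j (mem_range.mp hj)]

lemma upsTo_snoc {m : ℕ} (t : Fin m → Bool) (b : Bool) :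
    upsTo (Fin.snoc t b) (m + 1) = upsTo t m + b.toNat := by
  rw [upsTo_succ, extS_snoc, if_pos rfl]
  congr 1
  exact upsTo_congr fun j hj => by rw [extS_snoc, if_neg hj.ne]

lemma interiorPeaks_snoc {m : ℕ} (t : Fin m → Bool) (b : Bool) :
    interiorPeaks (Fin.snoc t b) = interiorPeaks t + (extS t (m - 1) && !b).toNat := by
  rcases m with _ | m
  · simp [interiorPeaks, extS_of_le]
  unfold interiorPeaks
  simp only [add_tsub_cancel_right]
  rw [range_add_one, filter_insert]
  have hprefix : ∀ j ∈ range m,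
      (extS (Fin.snoc t b) j = true ∧ extS (Fin.snoc t b) (j + 1) = false ↔
        extS t j = true ∧ extS t (j + 1) = false) := fun j hj => by
    have := mem_range.mp hj
    rw [extS_snoc, extS_snoc, if_neg (by omega), if_neg (by omega)]
  have hlast : extS (Fin.snoc t b) m = extS t m := by rw [extS_snoc, if_neg (by omega)]
  have hnew : extS (Fin.snoc t b) (m + 1) = b := by rw [extS_snoc, if_pos rfl]
  rw [filter_congr hprefix, hlast, hnew]
  cases extS t m <;> cases b <;> simp [card_insert_of_notMem]

/-- Peaks with the boundary convention at the initial vertex only, i.e. the descents `UD` of the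
word with a virtual up-step prefixed. -/
def leftPeaks {m : ℕ} (s : Fin m → Bool) : ℕ :=
  interiorPeaks s + if extS s 0 = false then 1 else 0

lemma leftPeaks_snoc {m : ℕ} (t : Fin (m + 1) → Bool) (b : Bool) :
    leftPeaks (Fin.snoc t b) = leftPeaks t + (extS t m && !b).toNat := by
  have h0 : extS (Fin.snoc t b) 0 = extS t 0 := by rw [extS_snoc, if_neg (by omega)]
  rw [leftPeaks, leftPeaks, interiorPeaks_snoc, h0, add_tsub_cancel_right]
  omega

lemma bPeaks_eq_leftPeaks_snoc (n : ℕ) (s : Fin (2 * n) → Bool) :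
    bPeaks n s = leftPeaks (Fin.snoc s false) := by
  rw [bPeaks, leftPeaks, interiorPeaks_snoc, extS_snoc_false]
  cases extS s (2 * n - 1) <;> simp [add_right_comm]

lemma eq_const_true_iff {m : ℕ} (s : Fin m → Bool) :
    s = (fun _ => true) ↔ ∀ j < m, extS s j = true := by
  refine ⟨fun h j hj => by rw [extS_of_lt s hj, h], fun h => funext fun i => ?_⟩
  rw [← h i i.isLt, extS_of_lt s i.isLt]

lemma upsTo_eq_succ_iff {m : ℕ} (s : Fin (m + 1) → Bool) :
    upsTo s (m + 1) = m + 1 ↔ s = fun _ => true := by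
  rw [eq_const_true_iff, upsTo]
  conv_lhs => rhs; rw [← card_range (m + 1)]
  rw [card_filter_eq_iff]
  simp only [mem_range]

lemma leftPeaks_eq_zero_iff {m : ℕ} (s : Fin (m + 1) → Bool) :
    leftPeaks s = 0 ↔ s = fun _ => true := by
  simp only [eq_const_true_iff, leftPeaks, interiorPeaks, add_tsub_cancel_right,
    add_eq_zero, card_eq_zero, filter_eq_empty_iff, mem_range, ite_eq_right_iff]
  constructor
  · rintro ⟨hstep, hs0⟩ j hj
    induction j with
    | zero => simpa using hs0
    | succ j ih => simpa [ih (by omega)] using hstep (by omega : j < m)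
  · intro h
    exact ⟨fun j hj => by simp [h (j + 1) (by omega)], fun h0 => by simp [h 0 (by omega)] at h0⟩

lemma extS_const_true_last (m : ℕ) : extS (fun _ : Fin (m + 1) => true) m = true :=
  extS_of_lt _ (by omega)

lemma leftPeaks_const_true (m : ℕ) : leftPeaks (fun _ : Fin (m + 1) => true) = 0 :=
  (leftPeaks_eq_zero_iff _).mpr rfl

lemma card_filter_extS_last_eq {m : ℕ} (b : Bool) (P : (Fin (m + 1) → Bool) → Prop)
    [DecidablePred P] :
    #{s | extS s m = b ∧ P s} = #{t : Fin m → Bool | P (Fin.snoc t b)} := by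
  have hsnoc : ∀ s : Fin (m + 1) → Bool, extS s m = b → Fin.snoc (Fin.init s) b = s := by
    rintro s rfl
    rw [extS_of_lt s (Nat.lt_succ_self m)]
    exact Fin.snoc_init_self s
  refine card_nbij' Fin.init (Fin.snoc · b) ?_ ?_ ?_ ?_
  · intro s hs
    simp only [coe_filter, mem_univ, true_and, Set.mem_ofPred_eq] at hs ⊢
    rw [hsnoc s hs.1]
    exact hs.2
  · intro t ht
    simp only [coe_filter, mem_univ, true_and, Set.mem_ofPred_eq] at ht ⊢
    rw [extS_snoc, if_pos rfl]
    exact ⟨rfl, ht⟩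
  · intro s hs
    simp only [coe_filter, mem_univ, true_and, Set.mem_ofPred_eq] at hs
    exact hsnoc s hs.1
  · intro t _
    exact Fin.init_snoc (α := fun _ => Bool) ..

/-- Words of length `m + 1` (so that the last step `extS s m` exists) with last step `b`, `u`
up-steps and `k` left peaks. -/
noncomputable def wordCount (m u k : ℕ) (b : Bool) : ℕ :=
  #{s : Fin (m + 1) → Bool | extS s m = b ∧ upsTo s (m + 1) = u ∧ leftPeaks s = k}

lemma wordCount_succ (m u k : ℕ) (c : Bool) :
    wordCount (m + 1) u k c = ∑ b, #{t : Fin (m + 1) → Bool | extS t m = b ∧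
      upsTo t (m + 1) + c.toNat = u ∧ leftPeaks t + (b && !c).toNat = k} := by
  rw [wordCount, card_filter_extS_last_eq,
    card_eq_sum_card_fiberwise (f := fun t => extS t m) (t := univ) fun _ _ => mem_univ _]
  refine sum_congr rfl fun b _ => ?_
  rw [filter_filter]
  congr 1
  refine filter_congr fun t _ => ?_
  rw [upsTo_snoc, leftPeaks_snoc]
  constructor
  · rintro ⟨⟨hu, hk⟩, rfl⟩
    exact ⟨rfl, hu, hk⟩
  · rintro ⟨rfl, hu, hk⟩
    exact ⟨⟨hu, hk⟩, rfl⟩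

lemma wordCount_succ_succ_true (m u k : ℕ) :
    wordCount (m + 1) (u + 1) k true = wordCount m u k true + wordCount m u k false := by
  rw [wordCount_succ, Fintype.sum_bool]
  simp [wordCount]

lemma wordCount_succ_false_succ (m u k : ℕ) :
    wordCount (m + 1) u (k + 1) false = wordCount m u k true + wordCount m u (k + 1) false := by
  rw [wordCount_succ, Fintype.sum_bool]
  simp [wordCount]

lemma wordCount_zero_true (m k : ℕ) : wordCount m 0 k true = 0 := by
  rw [wordCount, card_eq_zero, filter_eq_empty_iff]
  rintro s - ⟨hlast, hu, -⟩
  have := upsTo_succ s m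
  rw [hlast, Bool.toNat_true] at this
  omega

lemma wordCount_all_ups (m k : ℕ) (b : Bool) :
    wordCount m (m + 1) k b = if b = true ∧ k = 0 then 1 else 0 := by
  rw [wordCount, filter_congr (q := fun s => s = (fun _ => true) ∧ b = true ∧ k = 0)]
  · split_ifs with h <;> simp [h, filter_eq']
  · intro s _
    rw [upsTo_eq_succ_iff]
    constructor
    · rintro ⟨rfl, rfl, rfl⟩
      exact ⟨rfl, extS_const_true_last m, leftPeaks_const_true m⟩
    · rintro ⟨rfl, rfl, rfl⟩
      exact ⟨extS_const_true_last m, rfl, leftPeaks_const_true m⟩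

lemma wordCount_peaks_zero {m u : ℕ} (hu : u ≤ m) (b : Bool) : wordCount m u 0 b = 0 := by
  rw [wordCount, card_eq_zero, filter_eq_empty_iff]
  rintro s - ⟨-, hups, hpeaks⟩
  rw [leftPeaks_eq_zero_iff] at hpeaks
  rw [(upsTo_eq_succ_iff s).mpr hpeaks] at hups
  omega

lemma wordCount_zero_zero_false (k : ℕ) :
    wordCount 0 0 (k + 1) false = if k = 0 then 1 else 0 := by
  rw [wordCount, card_filter_extS_last_eq]
  split_ifs with hk <;>
    simp [hk, leftPeaks, interiorPeaks, extS_snoc_false, extS_of_le, upsTo]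

/-- With the virtual up-step prefixed, a counted word alternates `k + 2` (last step up) or `k + 1`
(last step down) runs of its `u + 1` up-steps with `k + 1` runs of its `m - u + 1` down-steps; the
binomials count these compositions. -/
theorem wordCount_eq_choose {m u : ℕ} (hu : u ≤ m) (k : ℕ) :
    wordCount m u (k + 1) true = u.choose (k + 1) * (m - u).choose k ∧
    wordCount m u (k + 1) false = u.choose k * (m - u).choose k := by
  induction m generalizing u k with
  | zero =>
    obtain rfl : u = 0 := by omega
    rw [wordCount_zero_true, wordCount_zero_zero_false]
    rcases k with _ | k <;> simp
  | succ m ih =>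
    constructor
    · rcases u with _ | u
      · simp [wordCount_zero_true]
      obtain ⟨hT, hF⟩ := ih (show u ≤ m by omega) k
      rw [wordCount_succ_succ_true, hT, hF, Nat.choose_succ_succ' u, Nat.add_sub_add_right]
      ring
    · rw [wordCount_succ_false_succ]
      rcases hu.eq_or_lt with rfl | hu
      · rw [wordCount_all_ups, wordCount_all_ups]
        rcases k with _ | k <;> simp
      replace hu : u ≤ m := by omega
      rcases k with _ | k
      · rw [wordCount_peaks_zero hu, (ih hu 0).2]
        simp
      rw [(ih hu k).1, (ih hu (k + 1)).2, Nat.sub_add_comm hu, Nat.choose_succ_succ' (m - u)]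
      ring

lemma card_filter_range_two_mul (p : ℕ → Prop) [DecidablePred p] (n : ℕ) :
    #{j ∈ range (2 * n) | p j} =
      #{i ∈ range n | p (2 * i)} + #{i ∈ range n | p (2 * i + 1)} := by
  simp only [card_filter]
  induction n with
  | zero => simp
  | succ n ih => rw [mul_add, mul_one, sum_range_succ, sum_range_succ, ih, sum_range_succ,
      sum_range_succ]; ring

def evenUpSet {n : ℕ} (s : Fin (2 * n) → Bool) : Finset ℕ :=
  {i ∈ range n | extS s (2 * i + 1) = true}

def oddUpSet {n : ℕ} (s : Fin (2 * n) → Bool) : Finset ℕ :=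
  {i ∈ range n | extS s (2 * i) = true}

def interleave {n : ℕ} (A B : Finset ℕ) : Fin (2 * n) → Bool :=
  fun j => if (j : ℕ) % 2 = 1 then decide ((j : ℕ) / 2 ∈ A) else decide ((j : ℕ) / 2 ∈ B)

lemma evenUps_eq_card_evenUpSet {n : ℕ} (s : Fin (2 * n) → Bool) :
    evenUps n s = #(evenUpSet s) := by
  rw [evenUps, card_filter_range_two_mul]
  simp [evenUpSet, Nat.add_mod]

lemma upsTo_eq_card_evenUpSet_add_card_oddUpSet {n : ℕ} (s : Fin (2 * n) → Bool) :
    upsTo s (2 * n) = #(evenUpSet s) + #(oddUpSet s) := by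
  rw [upsTo, card_filter_range_two_mul, add_comm, evenUpSet, oddUpSet]

lemma extS_interleave_odd {n : ℕ} (A B : Finset ℕ) {i : ℕ} (hi : i < n) :
    extS (interleave (n := n) A B) (2 * i + 1) = decide (i ∈ A) := by
  rw [extS_of_lt _ (by omega), interleave]
  simp only [Nat.mul_add_mod_self_left]
  simp [Nat.mul_add_div]

lemma extS_interleave_even {n : ℕ} (A B : Finset ℕ) {i : ℕ} (hi : i < n) :
    extS (interleave (n := n) A B) (2 * i) = decide (i ∈ B) := by
  rw [extS_of_lt _ (by omega), interleave]
  simp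

lemma evenUpSet_interleave {n : ℕ} {A : Finset ℕ} (hA : A ⊆ range n) (B : Finset ℕ) :
    evenUpSet (interleave (n := n) A B) = A := by
  ext i
  simp only [evenUpSet, mem_filter, mem_range]
  constructor
  · rintro ⟨hi, h⟩
    simpa [extS_interleave_odd A B hi] using h
  · intro hi
    have := mem_range.mp (hA hi)
    simp [extS_interleave_odd A B this, hi, this]

lemma oddUpSet_interleave {n : ℕ} (A : Finset ℕ) {B : Finset ℕ} (hB : B ⊆ range n) :
    oddUpSet (interleave (n := n) A B) = B := by
  ext i
  simp only [oddUpSet, mem_filter, mem_range]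
  constructor
  · rintro ⟨hi, h⟩
    simpa [extS_interleave_even A B hi] using h
  · intro hi
    have := mem_range.mp (hB hi)
    simp [extS_interleave_even A B this, hi, this]

lemma interleave_evenUpSet_oddUpSet {n : ℕ} (s : Fin (2 * n) → Bool) :
    interleave (evenUpSet s) (oddUpSet s) = s := by
  funext ⟨j, hj⟩
  simp only [interleave, evenUpSet, oddUpSet, mem_filter, mem_range]
  split_ifs with h
  · rw [extS_of_lt _ (by omega)]
    simp only [show j / 2 < n by omega, true_and, Bool.decide_eq_true]
    congr
    omega
  · rw [extS_of_lt _ (by omega)]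
    simp only [show j / 2 < n by omega, true_and, Bool.decide_eq_true]
    congr
    omega

lemma card_bilateral_evenUps (n v : ℕ) :
    #{s | isBilateral n s ∧ evenUps n s = v} = n.choose v * n.choose (n - v) := by
  rw [← card_range n, ← card_powersetCard, ← card_powersetCard, ← card_product, card_range]
  refine card_nbij' (fun s => (evenUpSet s, oddUpSet s)) (fun p => interleave p.1 p.2)
    ?_ ?_ ?_ ?_
  · intro s hs
    simp only [coe_filter, mem_univ, true_and, Set.mem_ofPred_eq, isBilateral,
      upsTo_eq_card_evenUpSet_add_card_oddUpSet, evenUps_eq_card_evenUpSet] at hs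
    simp only [mem_coe, mem_product, mem_powersetCard]
    exact ⟨⟨fun _ h => (mem_filter.mp h).1, hs.2⟩, fun _ h => (mem_filter.mp h).1, by omega⟩
  · rintro ⟨A, B⟩ hAB
    simp only [mem_coe, mem_product, mem_powersetCard] at hAB
    simp only [coe_filter, mem_univ, true_and, Set.mem_ofPred_eq, isBilateral,
      upsTo_eq_card_evenUpSet_add_card_oddUpSet, evenUps_eq_card_evenUpSet,
      evenUpSet_interleave hAB.1.1, oddUpSet_interleave A hAB.2.1]
    have := card_range n ▸ card_le_card hAB.1.1
    omega
  · intro s _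
    exact interleave_evenUpSet_oddUpSet s
  · rintro ⟨A, B⟩ hAB
    simp only [mem_coe, mem_product, mem_powersetCard] at hAB
    simp only [evenUpSet_interleave hAB.1.1, oddUpSet_interleave A hAB.2.1]

lemma card_bilateral_bPeaks (n k : ℕ) :
    #{s | isBilateral n s ∧ bPeaks n s = k} = wordCount (2 * n) n k false := by
  rw [wordCount, card_filter_extS_last_eq]
  congr 1
  refine filter_congr fun s _ => ?_
  rw [isBilateral, upsTo_snoc, bPeaks_eq_leftPeaks_snoc, Bool.toNat_false, add_zero]

theorem stmt16_general (n v : ℕ) :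
    ((Finset.univ : Finset (Fin (2*n) → Bool)).filter
        (fun s => isBilateral n s ∧ evenUps n s = v)).card
      = ((Finset.univ : Finset (Fin (2*n) → Bool)).filter
        (fun s => isBilateral n s ∧ bPeaks n s = v + 1)).card := by
  rw [card_bilateral_evenUps, card_bilateral_bPeaks,
    (wordCount_eq_choose (by omega : n ≤ 2 * n) v).2, show 2 * n - n = n by omega]
  rcases le_or_gt v n with hvn | hvn
  · rw [Nat.choose_symm hvn]
  · simp [Nat.choose_eq_zero_of_lt hvn]

theorem stmt16 (n v : ℕ) (hn : 1 ≤ n) (hv : v ≤ n - 1) :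
    ((Finset.univ : Finset (Fin (2*n) → Bool)).filter
        (fun s => isBilateral n s ∧ evenUps n s = v)).card
      = ((Finset.univ : Finset (Fin (2*n) → Bool)).filter
        (fun s => isBilateral n s ∧ bPeaks n s = v + 1)).card :=
  stmt16_general n v
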